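/- For every k with 1 ≤ k ≤ n, the following identity (relation R̃_k^+) holds in F_q[x_1,…,x_n,y_1,…,y_n]: Σ_{i=0}^{k−1} Σ_{j=0}^{n−k} (−1)^{i+j} ( c_{k−1,i}^q · c*_{n−k,j} · u_{i−j+1}^{q^{min(i+1,j)}} − f̃_k · c_{k−1,i} · c*_{n−k,j} · u_{i−j}^{q^{min(i,j)}} ) = 0. -/

import Mathlib

open MvPolynomial

variable (F : Type) [Field F] [Fintype F] (n : ℕ)

/-- `fX F n k` is the orbit product `f_k` (1-indexed, meaningful for `1 ≤ k ≤ n`). -/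
noncomputable def fX (k : ℕ) : MvPolynomial (Fin n ⊕ Fin n) F :=
  if h : 1 ≤ k ∧ k ≤ n then
    ∏ α : Fin (k - 1) → F,
      (X (Sum.inl ⟨k - 1, by omega⟩) +
        ∑ j : Fin (k - 1), C (α j) * X (Sum.inl ⟨j.val, by omega⟩))
  else 0

/-- `fY F n k` is `f_k^*` (1-indexed), the orbit product of `y_{n+1-k}`. -/
noncomputable def fY (k : ℕ) : MvPolynomial (Fin n ⊕ Fin n) F :=
  if h : 1 ≤ k ∧ k ≤ n then
    ∏ α : Fin (k - 1) → F,
      (X (Sum.inr ⟨n - k, by omega⟩) +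
        ∑ j : Fin (k - 1), C (α j) * X (Sum.inr ⟨n - 1 - j.val, by omega⟩))
  else 0

/-- `uInv F n j` is the invariant `u_j`, for `j : ℤ`. -/
noncomputable def uInv (j : ℤ) : MvPolynomial (Fin n ⊕ Fin n) F :=
  if 0 ≤ j then ∑ k : Fin n, X (Sum.inl k) ^ (Fintype.card F) ^ j.toNat * X (Sum.inr k)
  else ∑ k : Fin n, X (Sum.inl k) * X (Sum.inr k) ^ (Fintype.card F) ^ (-j).toNat

/-- `cX F n s t` is the Dickson-type invariant `c_{s,t}` (in the `x`-variables):
the sum over strictly increasing sequences `1 ≤ j_1 < ⋯ < j_{s-t} ≤ s` (encoded as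
strictly monotone functions `Fin (s-t) → Fin s`) of `∏_l f_{j_l}^{(q-1)·q^{t+l-j_l}}`. -/
noncomputable def cX (s t : ℕ) : MvPolynomial (Fin n ⊕ Fin n) F :=
  if s ≤ n then
    ∑ g ∈ Finset.univ.filter (fun g : Fin (s - t) → Fin s => ∀ a b : Fin (s - t), a < b → g a < g b),
      ∏ l : Fin (s - t),
        fX F n ((g l).val + 1) ^ ((Fintype.card F - 1) * (Fintype.card F) ^ (t + l.val - (g l).val))
  else 0

/-- `cY F n s t` is `c_{s,t}^*` (in the `y`-variables). -/
noncomputable def cY (s t : ℕ) : MvPolynomial (Fin n ⊕ Fin n) F :=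
  if s ≤ n then
    ∑ g ∈ Finset.univ.filter (fun g : Fin (s - t) → Fin s => ∀ a b : Fin (s - t), a < b → g a < g b),
      ∏ l : Fin (s - t),
        fY F n ((g l).val + 1) ^ ((Fintype.card F - 1) * (Fintype.card F) ^ (t + l.val - (g l).val))
  else 0

/-!
Let `P_s(Z) = ∏_{α ∈ F_q^s} (Z + Σ_j α_j v_j)` be the orbit product of a sequence `v`, so that
`f_{s+1} = P_s(v_s)`. Since `∏_{a ∈ F_q} (w + a c) = w^q - c^{q-1} w` and
`P_{s+1}(Z) = ∏_a P_s(Z + a v_s)`, induction on `s` shows that `P_s` is the `q`-polynomial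
`(-1)^s L_s` with `L_s(Z) = Σ_i (-1)^i c_{s,i} Z^{q^i}`; the induction step is the recursion
`c_{s+1,t+1} = c_{s,t}^q + f̃_{s+1} c_{s,t+1}`, obtained by splitting the index sequences
`j_1 < ⋯ < j_{s-t}` according to whether their last entry is `s + 1`.

Since `u_{i-j}^{q^{min(i,j)}} = Σ_m x_m^{q^i} y_m^{q^j}`, the left side of `R̃_k^+` equals
`Σ_m (L_{k-1}(x_m)^q - f̃_k L_{k-1}(x_m)) L*_{n-k}(y_m) = -Σ_m L_k(x_m) L*_{n-k}(y_m)`.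
Every term vanishes: `L_k` vanishes at `x_1, …, x_k`, and `L*_{n-k}`, built from
`y_n, …, y_{k+1}`, vanishes at those variables.
-/

open Finset FiniteField

theorem Fin.val_add_le_of_strictMono {m s : ℕ} {g : Fin m → Fin s} (hg : StrictMono g) :
    ∀ (d : ℕ) (a : Fin m) (hd : a + d < m), (g a : ℕ) + d ≤ g ⟨a + d, hd⟩
  | 0, _, _ => le_rfl
  | d + 1, a, hd =>
    (Fin.val_add_le_of_strictMono hg d a (by omega)).trans_lt (hg (by simp [Fin.lt_def]))

def strictMonoFuns (m s : ℕ) : Finset (Fin m → Fin s) :=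
  univ.filter fun g => ∀ a b : Fin m, a < b → g a < g b

theorem mem_strictMonoFuns {m s : ℕ} {g : Fin m → Fin s} :
    g ∈ strictMonoFuns m s ↔ StrictMono g := by
  simp [strictMonoFuns, StrictMono]

theorem strictMonoFuns_eq_empty {m s : ℕ} (h : s < m) : strictMonoFuns m s = ∅ :=
  eq_empty_of_forall_notMem fun g hg => by
    have := Fintype.card_le_of_injective g (mem_strictMonoFuns.1 hg).injective
    simp only [Fintype.card_fin] at this
    omega

theorem sum_strictMonoFuns_succ {M : Type*} [AddCommMonoid M] (m s : ℕ)
    (φ : (Fin (m + 1) → Fin (s + 1)) → M) :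
    ∑ g ∈ strictMonoFuns (m + 1) (s + 1), φ g =
      ∑ g ∈ strictMonoFuns m s, φ (Fin.snoc (Fin.castSucc ∘ g) (Fin.last s)) +
        ∑ g ∈ strictMonoFuns (m + 1) s, φ (Fin.castSucc ∘ g) := by
  rw [← sum_filter_add_sum_filter_not _ (fun g => g (Fin.last m) = Fin.last s)]
  congr 1
  · symm
    refine sum_bij (fun g _ => Fin.snoc (Fin.castSucc ∘ g) (Fin.last s)) ?_ ?_ ?_ fun _ _ => rfl
    · intro g hg
      simp only [mem_filter, mem_strictMonoFuns, Fin.snoc_last, and_true] at hg ⊢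
      rw [← Fin.insertNth_last', Fin.strictMono_insertNth_iff]
      exact ⟨Fin.strictMono_castSucc.comp hg, fun i _ => Fin.castSucc_lt_last _,
        fun i h => absurd h (not_le.2 (Fin.castSucc_lt_last i))⟩
    · intro g₁ _ g₂ _ h
      funext l
      simpa using congrFun h l.castSucc
    · intro g hg
      simp only [mem_filter, mem_strictMonoFuns] at hg
      have hne : ∀ l : Fin m, g l.castSucc ≠ Fin.last s := fun l =>
        hg.2 ▸ (hg.1 (Fin.castSucc_lt_last l)).ne
      refine ⟨fun l => (g l.castSucc).castPred (hne l), mem_strictMonoFuns.2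
        (Fin.strictMono_castPred_comp hne (hg.1.comp Fin.strictMono_castSucc)), ?_⟩
      funext l
      cases l using Fin.lastCases <;> simp [hg.2]
  · symm
    refine sum_bij (fun g _ => Fin.castSucc ∘ g) ?_ ?_ ?_ fun _ _ => rfl
    · intro g hg
      simp only [mem_filter, mem_strictMonoFuns, Function.comp_apply] at hg ⊢
      exact ⟨Fin.strictMono_castSucc.comp hg, (Fin.castSucc_lt_last _).ne⟩
    · intro g₁ _ g₂ _ h
      funext l
      simpa using congrFun h l
    · intro g hg
      simp only [mem_filter, mem_strictMonoFuns] at hg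
      have hne : ∀ l, g l ≠ Fin.last s := fun l =>
        ((hg.1.monotone (Fin.le_last l)).trans_lt (Fin.lt_last_iff_ne_last.2 hg.2)).ne
      exact ⟨fun l => (g l).castPred (hne l),
        mem_strictMonoFuns.2 (Fin.strictMono_castPred_comp hne hg.1), by funext l; simp⟩

section OrbitProduct

variable {K R : Type*} [Field K] [Fintype K] [CommRing R] [Algebra K R]

local notation "q" => Fintype.card K

theorem frobeniusAlgHom_pow_apply (x : R) (i : ℕ) :
    (frobeniusAlgHom K R ^ i) x = x ^ q ^ i := by
  rw [AlgHom.coe_pow, coe_frobeniusAlgHom, pow_iterate]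

theorem sum_pow_card_pow {ι : Type*} (s : Finset ι) (f : ι → R) (i : ℕ) :
    (∑ x ∈ s, f x) ^ q ^ i = ∑ x ∈ s, f x ^ q ^ i := by
  simp only [← frobeniusAlgHom_pow_apply (K := K), map_sum]

theorem add_smul_pow_card_pow (z w : R) (a : K) (i : ℕ) :
    (z + a • w) ^ q ^ i = z ^ q ^ i + a • w ^ q ^ i := by
  simp only [← frobeniusAlgHom_pow_apply (K := K), map_add, map_smul]

theorem neg_one_pow_card : (-1 : R) ^ q = -1 := by
  have := frobeniusAlgHom_pow_apply (K := K) (-1 : R) 1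
  rw [pow_one, pow_one, map_neg, map_one] at this
  exact this.symm

theorem prod_X_sub_C_eq_X_pow_card_sub_X :
    ∏ a : K, (Polynomial.X - Polynomial.C a) = Polynomial.X ^ q - Polynomial.X := by
  have hroots := roots_X_pow_card_sub_X K
  have hmonic : (Polynomial.X ^ q - Polynomial.X : Polynomial K).Monic :=
    Polynomial.monic_X_pow_sub (by simpa using Fintype.one_lt_card)
  have := Polynomial.prod_multiset_X_sub_C_of_monic_of_roots_card_eq hmonic (by
    rw [hroots, X_pow_card_sub_X_natDegree_eq K Fintype.one_lt_card]; rfl)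
  rwa [hroots] at this

theorem prod_add_algebraMap {L : Type*} [Field L] [Algebra K L] (y : L) :
    ∏ a : K, (y + algebraMap K L a) = y ^ q - y := by
  have := congrArg (Polynomial.aeval y) (prod_X_sub_C_eq_X_pow_card_sub_X (K := K))
  simp only [map_prod, map_sub, map_pow, Polynomial.aeval_X, Polynomial.aeval_C] at this
  rw [← this]
  exact Fintype.prod_equiv (Equiv.neg K) _ _ (by simp [sub_eq_add_neg])

theorem prod_add_smul [IsDomain R] (w c : R) :
    ∏ a : K, (w + a • c) = w ^ q - c ^ (q - 1) * w := by
  have hq : 1 < q := Fintype.one_lt_card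
  rcases eq_or_ne c 0 with rfl | hc
  · simp [zero_pow (Nat.sub_ne_zero_of_lt hq)]
  let L := FractionRing R
  apply IsFractionRing.injective R L
  have hc' : algebraMap R L c ≠ 0 := (map_ne_zero_iff _ (IsFractionRing.injective R L)).2 hc
  set W := algebraMap R L w
  set D := algebraMap R L c
  have hfac : ∀ a : K, algebraMap R L (w + a • c) = D * (W / D + algebraMap K L a) := by
    intro a
    rw [Algebra.smul_def, map_add, map_mul, ← IsScalarTower.algebraMap_apply, mul_add,
      mul_div_cancel₀ _ hc', mul_comm]
  calc algebraMap R L (∏ a : K, (w + a • c))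
      = ∏ a : K, D * (W / D + algebraMap K L a) := by
        simp only [map_prod, hfac]
    _ = D ^ q * ((W / D) ^ q - W / D) := by
        rw [prod_mul_distrib, prod_const, card_univ, prod_add_algebraMap]
    _ = algebraMap R L (w ^ q - c ^ (q - 1) * w) := by
        have hD : D ^ q = D ^ (q - 1) * D := by rw [← pow_succ, Nat.sub_add_cancel hq.le]
        simp only [map_sub, map_mul, map_pow]
        rw [div_pow, hD, mul_sub, mul_div_cancel₀ _ (mul_ne_zero (pow_ne_zero _ hc') hc'),
          mul_assoc, mul_div_cancel₀ _ hc']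

variable (K) in
noncomputable def orbitProd (v : ℕ → R) (s : ℕ) (z : R) : R :=
  ∏ α : Fin s → K, (z + ∑ j : Fin s, α j • v j)

-- `c_{s,t}` is `dicksonSum K v (s - t) s t`; the length `m` of the index sequences is kept
-- separate from `s - t` so that the recursions below can be stated.
variable (K) in
noncomputable def dicksonSum (v : ℕ → R) (m s t : ℕ) : R :=
  ∑ g ∈ strictMonoFuns m s, ∏ l : Fin m,
    orbitProd K v (g l) (v (g l)) ^ ((q - 1) * q ^ (t + l - g l))

variable (K) in
noncomputable def dicksonCoeff (v : ℕ → R) (s t : ℕ) : R :=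
  dicksonSum K v (s - t) s t

variable (K) in
noncomputable def linearizedSum (v : ℕ → R) (s : ℕ) (z : R) : R :=
  ∑ i ∈ range (s + 1), (-1) ^ i * dicksonCoeff K v s i * z ^ q ^ i

variable (v : ℕ → R)

theorem orbitProd_zero (z : R) : orbitProd K v 0 z = z := by
  simp [orbitProd]

theorem orbitProd_succ (s : ℕ) (z : R) :
    orbitProd K v (s + 1) z = ∏ a : K, orbitProd K v s (z + a • v s) := by
  rw [orbitProd, ← (Fin.snocEquiv fun _ => K).prod_comp, Fintype.prod_prod_type]
  refine prod_congr rfl fun a _ => prod_congr rfl fun α _ => ?_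
  simp only [Fin.snocEquiv_apply, Fin.sum_univ_castSucc, Fin.snoc_castSucc, Fin.snoc_last,
    Fin.val_castSucc, Fin.val_last]
  abel

theorem orbitProd_apply_eq_zero {s m : ℕ} (hm : m < s) : orbitProd K v s (v m) = 0 :=
  prod_eq_zero (mem_univ (Pi.single ⟨m, hm⟩ (-1))) <| by
    simp [Pi.single_apply, ite_smul]

theorem dicksonSum_zero_left (s t : ℕ) : dicksonSum K v 0 s t = 1 := by
  simp [dicksonSum, strictMonoFuns]

theorem dicksonSum_eq_zero_of_lt {m s : ℕ} (t : ℕ) (h : s < m) : dicksonSum K v m s t = 0 := by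
  simp [dicksonSum, strictMonoFuns_eq_empty h]

theorem dicksonSum_succ_succ {m s t : ℕ} (h : t + m = s) :
    dicksonSum K v (m + 1) (s + 1) t =
      orbitProd K v s (v s) ^ (q - 1) * dicksonSum K v m s t + dicksonSum K v (m + 1) s t := by
  rw [dicksonSum, sum_strictMonoFuns_succ, dicksonSum, dicksonSum, mul_sum]
  congr 1
  refine sum_congr rfl fun g _ => ?_
  rw [Fin.prod_univ_castSucc, mul_comm]
  simp [show t + m - s = 0 by omega]

theorem dicksonSum_succ_pow {m s t : ℕ} (h : t + m + 1 = s) :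
    dicksonSum K v (m + 1) s (t + 1) = dicksonSum K v (m + 1) s t ^ q := by
  rw [dicksonSum, dicksonSum, ← frobeniusAlgHom_apply K, map_sum]
  refine sum_congr rfl fun g hg => ?_
  rw [map_prod]
  refine prod_congr rfl fun l _ => ?_
  have hle := Fin.val_add_le_of_strictMono (mem_strictMonoFuns.1 hg) (m - l) l (by omega)
  have hlt := (g ⟨l + (m - l), by omega⟩).isLt
  rw [frobeniusAlgHom_apply, ← pow_mul, mul_assoc, ← pow_succ,
    show t + 1 + l - g l = t + l - g l + 1 by omega]

theorem dicksonCoeff_self (s : ℕ) : dicksonCoeff K v s s = 1 := by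
  rw [dicksonCoeff, Nat.sub_self, dicksonSum_zero_left]

theorem dicksonCoeff_succ_zero (s : ℕ) :
    dicksonCoeff K v (s + 1) 0 = orbitProd K v s (v s) ^ (q - 1) * dicksonCoeff K v s 0 := by
  rw [dicksonCoeff, dicksonCoeff, Nat.sub_zero, Nat.sub_zero, dicksonSum_succ_succ v (zero_add s),
    dicksonSum_eq_zero_of_lt v 0 (Nat.lt_succ_self s), add_zero]

theorem dicksonCoeff_succ_succ {s t : ℕ} (h : t < s) :
    dicksonCoeff K v (s + 1) (t + 1) =
      dicksonCoeff K v s t ^ q + orbitProd K v s (v s) ^ (q - 1) * dicksonCoeff K v s (t + 1) := by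
  obtain ⟨m, rfl⟩ : ∃ m, s = t + m + 1 := ⟨s - t - 1, by omega⟩
  rw [dicksonCoeff, dicksonCoeff, dicksonCoeff, show t + m + 1 + 1 - (t + 1) = m + 1 by omega,
    show t + m + 1 - t = m + 1 by omega, show t + m + 1 - (t + 1) = m by omega,
    dicksonSum_succ_succ v (by omega), dicksonSum_succ_pow v rfl, add_comm]

theorem linearizedSum_pow_card (s : ℕ) (z : R) :
    linearizedSum K v s z ^ q =
      ∑ i ∈ range (s + 1), (-1) ^ i * dicksonCoeff K v s i ^ q * z ^ q ^ (i + 1) := by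
  rw [linearizedSum, ← frobeniusAlgHom_apply K, map_sum]
  refine sum_congr rfl fun i _ => ?_
  simp only [map_mul, map_pow, map_neg, map_one, frobeniusAlgHom_apply, ← pow_mul, pow_succ]
  ring

theorem linearizedSum_add_smul (s : ℕ) (z w : R) (a : K) :
    linearizedSum K v s (z + a • w) = linearizedSum K v s z + a • linearizedSum K v s w := by
  simp only [linearizedSum, add_smul_pow_card_pow, mul_add, sum_add_distrib, smul_sum,
    mul_smul_comm]

theorem linearizedSum_succ (s : ℕ) (z : R) :
    linearizedSum K v (s + 1) z =
      orbitProd K v s (v s) ^ (q - 1) * linearizedSum K v s z - linearizedSum K v s z ^ q := by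
  have hmid : ∀ i ∈ range s,
      (-1) ^ (i + 1) * dicksonCoeff K v (s + 1) (i + 1) * z ^ q ^ (i + 1) =
        orbitProd K v s (v s) ^ (q - 1) *
            ((-1) ^ (i + 1) * dicksonCoeff K v s (i + 1) * z ^ q ^ (i + 1)) -
          (-1) ^ i * dicksonCoeff K v s i ^ q * z ^ q ^ (i + 1) := by
    intro i hi
    rw [dicksonCoeff_succ_succ v (mem_range.1 hi)]
    ring
  rw [linearizedSum_pow_card, linearizedSum, linearizedSum]
  conv_lhs => rw [sum_range_succ', sum_range_succ, sum_congr rfl hmid, sum_sub_distrib]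
  conv_rhs => rw [sum_range_succ', sum_range_succ, mul_add, mul_sum]
  rw [dicksonCoeff_succ_zero, dicksonCoeff_self, dicksonCoeff_self]
  ring

theorem neg_linearizedSum_succ (s : ℕ) (z : R) :
    -linearizedSum K v (s + 1) z = ∑ i ∈ range (s + 1), (-1) ^ i *
      (dicksonCoeff K v s i ^ q * z ^ q ^ (i + 1) -
        orbitProd K v s (v s) ^ (q - 1) * dicksonCoeff K v s i * z ^ q ^ i) := by
  rw [linearizedSum_succ, linearizedSum_pow_card, linearizedSum, mul_sum, ← sum_sub_distrib,
    ← sum_neg_distrib]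
  exact sum_congr rfl fun i _ => by ring

theorem orbitProd_eq_neg_one_pow_mul_linearizedSum [IsDomain R] (s : ℕ) (z : R) :
    orbitProd K v s z = (-1) ^ s * linearizedSum K v s z := by
  induction s generalizing z with
  | zero => simp [orbitProd_zero, linearizedSum, dicksonCoeff_self]
  | succ s ih =>
    have hshift : ∀ a : K, orbitProd K v s (z + a • v s) =
        (-1) ^ s * linearizedSum K v s z + a • orbitProd K v s (v s) := by
      intro a
      rw [ih, ih, linearizedSum_add_smul, mul_add, mul_smul_comm]
    rw [orbitProd_succ, prod_congr rfl fun a _ => hshift a, prod_add_smul, linearizedSum_succ,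
      mul_pow, ← pow_mul, mul_comm s, pow_mul, neg_one_pow_card]
    ring

theorem linearizedSum_apply_eq_zero [IsDomain R] {s m : ℕ} (hm : m < s) :
    linearizedSum K v s (v m) = 0 := by
  rw [← neg_one_pow_mul_eq_zero_iff (n := s), ← orbitProd_eq_neg_one_pow_mul_linearizedSum,
    orbitProd_apply_eq_zero v hm]

end OrbitProduct

section Variables

variable (R : Type*) [CommSemiring R]

noncomputable def xSeq (j : ℕ) : MvPolynomial (Fin n ⊕ Fin n) R :=
  if h : j < n then X (Sum.inl ⟨j, h⟩) else 0

-- `y_n, y_{n-1}, …, y_1, 0, 0, …`, so that `f*_i` is the orbit product of its first `i` terms.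
noncomputable def ySeq (j : ℕ) : MvPolynomial (Fin n ⊕ Fin n) R :=
  if h : j < n then X (Sum.inr ⟨n - 1 - j, by omega⟩) else 0

theorem xSeq_val (m : Fin n) : xSeq n R m = X (Sum.inl m) := by
  simp [xSeq]

theorem ySeq_rev (m : Fin n) : ySeq n R (n - 1 - m) = X (Sum.inr m) := by
  rw [ySeq, dif_pos (by omega)]
  congr
  omega

end Variables

theorem fX_succ_eq_orbitProd {s : ℕ} (hs : s < n) :
    fX F n (s + 1) = orbitProd F (xSeq n F) s (xSeq n F s) := by
  rw [fX, dif_pos ⟨le_add_self, hs⟩]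
  refine prod_congr rfl fun α _ => ?_
  simp [xSeq, hs, C_mul', (Fin.is_lt _).trans hs]

theorem fY_succ_eq_orbitProd {s : ℕ} (hs : s < n) :
    fY F n (s + 1) = orbitProd F (ySeq n F) s (ySeq n F s) := by
  rw [fY, dif_pos ⟨le_add_self, hs⟩]
  refine prod_congr rfl fun α _ => ?_
  simp [ySeq, hs, C_mul', (Fin.is_lt _).trans hs]
  omega

theorem cX_eq_dicksonCoeff {s : ℕ} (hs : s ≤ n) (t : ℕ) :
    cX F n s t = dicksonCoeff F (xSeq n F) s t := by
  rw [cX, if_pos hs, dicksonCoeff, dicksonSum]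
  refine sum_congr rfl fun g _ => prod_congr rfl fun l _ => ?_
  rw [fX_succ_eq_orbitProd F n ((g l).is_lt.trans_le hs)]

theorem cY_eq_dicksonCoeff {s : ℕ} (hs : s ≤ n) (t : ℕ) :
    cY F n s t = dicksonCoeff F (ySeq n F) s t := by
  rw [cY, if_pos hs, dicksonCoeff, dicksonSum]
  refine sum_congr rfl fun g _ => prod_congr rfl fun l _ => ?_
  rw [fY_succ_eq_orbitProd F n ((g l).is_lt.trans_le hs)]

theorem uInv_sub_pow_min (a b : ℕ) :
    uInv F n ((a : ℤ) - b) ^ Fintype.card F ^ min a b =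
      ∑ m : Fin n, X (Sum.inl m) ^ Fintype.card F ^ a * X (Sum.inr m) ^ Fintype.card F ^ b := by
  rw [uInv, apply_ite (· ^ Fintype.card F ^ min a b)]
  split_ifs with h <;> rw [sum_pow_card_pow] <;> refine sum_congr rfl fun m _ => ?_ <;>
    rw [mul_pow, ← pow_mul, ← pow_add]
  · rw [min_eq_right (by omega), show (↑a - ↑b : ℤ).toNat + b = a by omega]
  · rw [min_eq_left (by omega), show (-(↑a - ↑b) : ℤ).toNat + a = b by omega]

theorem relation_Rk_tilde_plus (k : ℕ) (hk2 : k ≤ n) :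
    ∑ i ∈ Finset.range k, ∑ j ∈ Finset.range (n - k + 1),
      (-1 : MvPolynomial (Fin n ⊕ Fin n) F) ^ (i + j) *
        (cX F n (k - 1) i ^ (Fintype.card F) * cY F n (n - k) j *
            uInv F n ((i : ℤ) - (j : ℤ) + 1) ^ (Fintype.card F ^ min (i + 1) j)
          - fX F n k ^ (Fintype.card F - 1) * cX F n (k - 1) i * cY F n (n - k) j *
            uInv F n ((i : ℤ) - (j : ℤ)) ^ (Fintype.card F ^ min i j))
    = 0 := by
  obtain _ | k := k
  · simp
  have hu : ∀ i j : ℕ, (i : ℤ) - j + 1 = ((i + 1 : ℕ) : ℤ) - j := by intros; push_cast; ring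
  simp only [Nat.add_sub_cancel, hu, uInv_sub_pow_min, fX_succ_eq_orbitProd F n hk2,
    cX_eq_dicksonCoeff F n (by omega : k ≤ n), cY_eq_dicksonCoeff F n (Nat.sub_le n (k + 1))]
  calc _ = ∑ m : Fin n, -linearizedSum F (xSeq n F) (k + 1) (X (Sum.inl m)) *
        linearizedSum F (ySeq n F) (n - (k + 1)) (X (Sum.inr m)) := by
        simp only [neg_linearizedSum_succ]
        simp only [linearizedSum, sum_mul_sum]
        conv_rhs => rw [sum_comm]; arg 2; ext i; rw [sum_comm]
        refine sum_congr rfl fun i _ => sum_congr rfl fun j _ => ?_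
        rw [mul_sum, mul_sum, ← sum_sub_distrib, mul_sum]
        exact sum_congr rfl fun m _ => by ring
    _ = 0 := sum_eq_zero fun m _ => by
        rcases lt_or_ge (m : ℕ) (k + 1) with hm | hm
        · rw [← xSeq_val, linearizedSum_apply_eq_zero _ hm, neg_zero, zero_mul]
        · rw [← ySeq_rev, linearizedSum_apply_eq_zero _ (by omega), mul_zero]
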